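/- Each unification rule (Remove, Decomp, Conflict, Choose, Coalesce, Swap, Merge, Replace, Merep) preserves the set of solutions of a unification problem: a ground substitution θ solves the problem before a rule application iff it solves the problem afterwards. -/

import Mathlib

/-- Finite first-order terms. -/
inductive Tm (F V : Type) : Type
  | var : V → Tm F V
  | app : F → List (Tm F V) → Tm F V

namespace Tm
variable {F V W : Type}

/-- Application of a substitution to a term. -/
def subst (σ : V → Tm F W) : Tm F V → Tm F W
  | .var x => σ x
  | .app f l => .app f (l.attach.map fun t => t.1.subst σ)
  decreasing_by simp only [Tm.app.sizeOf_spec]; have := List.sizeOf_lt_of_mem t.2; omega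

/-- Size of a term (variables have size 0). -/
def size : Tm F V → ℕ
  | .var _ => 0
  | .app _ l => 1 + (l.attach.map fun t => t.1.size).sum
  decreasing_by simp only [Tm.app.sizeOf_spec]; have := List.sizeOf_lt_of_mem t.2; omega

/-- `x` occurs in `t`. -/
inductive HasVar (x : V) : Tm F V → Prop
  | var : HasVar x (.var x)
  | app {f l t} : t ∈ l → HasVar x t → HasVar x (.app f l)

/-- `t` is not a variable. -/
def NonVar (t : Tm F V) : Prop := ∀ z, t ≠ .var z

end Tm

section Unification

variable {F V : Type} [DecidableEq V]

/-- An equation is an oriented pair of terms; a unification problem is a finite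
multiset of equations. -/
abbrev Eqn (F V : Type) := Tm F V × Tm F V

/-- The substitution `{x ↦ s}`. -/
def single (x : V) (s : Tm F V) : V → Tm F V := fun z => if z = x then s else .var z

/-- Apply `{x ↦ s}` to every term of a problem. -/
def substProb (x : V) (s : Tm F V) (P : Multiset (Eqn F V)) : Multiset (Eqn F V) :=
  P.map fun e => (e.1.subst (single x s), e.2.subst (single x s))

/-- `x` occurs in the problem `P`. -/
def VarInProb (x : V) (P : Multiset (Eqn F V)) : Prop :=
  ∃ e ∈ P, Tm.HasVar x e.1 ∨ Tm.HasVar x e.2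

/-- The unification rules Remove, Decomp, Conflict, Choose, Coalesce, Swap,
Merge, Replace (all rules except Merep); `none` stands for `⊥`. -/
inductive UStep1 : Multiset (Eqn F V) → Option (Multiset (Eqn F V)) → Prop
  | remove (s P) : UStep1 ((s, s) ::ₘ P) (some P)
  | decomp (f ss ts P) : ss.length = ts.length →
      UStep1 ((.app f ss, .app f ts) ::ₘ P) (some ((ss.zip ts : List (Eqn F V)) + P))
  | conflict (f g ss ts P) : f ≠ g ∨ ss.length ≠ ts.length →
      UStep1 ((.app f ss, .app g ts) ::ₘ P) none
  | choose (x y P) : ¬ VarInProb x P → VarInProb y P →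
      UStep1 ((.var y, .var x) ::ₘ P) (some ((.var x, .var y) ::ₘ P))
  | coalesce (x y P) : x ≠ y → VarInProb x P → VarInProb y P →
      UStep1 ((.var x, .var y) ::ₘ P) (some ((.var x, .var y) ::ₘ substProb x (.var y) P))
  | swap (u x P) : u.NonVar → UStep1 ((u, .var x) ::ₘ P) (some ((.var x, u) ::ₘ P))
  | merge (x s t P) : 0 < s.size → s.size ≤ t.size →
      UStep1 ((.var x, s) ::ₘ (.var x, t) ::ₘ P)
        (some ((.var x, s) ::ₘ (s, t) ::ₘ P))
  | replace (x s P) : ¬ Tm.HasVar x s → s.NonVar → VarInProb x P →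
      UStep1 ((.var x, s) ::ₘ P) (some ((.var x, s) ::ₘ substProb x s P))

/-- The full set of unification rules: the rules above together with Merep,
which only applies when no other rule applies. -/
inductive UStep : Multiset (Eqn F V) → Option (Multiset (Eqn F V)) → Prop
  | base {P Q} : UStep1 P Q → UStep P Q
  | merep (x y s P) : Tm.HasVar x s → s.NonVar → ¬ Tm.HasVar y s → ¬ VarInProb y P →
      (∀ Q, ¬ UStep1 ((.var y, .var x) ::ₘ (.var x, s) ::ₘ P) Q) →
      UStep ((.var y, .var x) ::ₘ (.var x, s) ::ₘ P)
        (some ((.var y, s) ::ₘ (.var x, s) ::ₘ P))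

end Unification

/-- Evaluation of a finite term in an `F`-algebra `T` (e.g. the algebra of
possibly infinite rational trees) under an assignment `θ` of the variables. -/
def ev {F V T : Type} (ap : F → List T → T) (θ : V → T) : Tm F V → T
  | .var x => θ x
  | .app f l => ap f (l.attach.map fun t => ev ap θ t.1)
  decreasing_by simp only [Tm.app.sizeOf_spec]; have := List.sizeOf_lt_of_mem t.2; omega

/-- Constructor-injectivity, as holds in the algebra of (finite or infinite
rational) trees: distinct constructors build distinct trees, injectively. -/
def InjAp {F T : Type} (ap : F → List T → T) : Prop :=
  ∀ f l g m, ap f l = ap g m → f = g ∧ l = m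

/-- `θ` is a solution of the problem `P`: it equates both sides of every
equation of `P` (in the tree algebra `T`). -/
def Solves {F V T : Type} (ap : F → List T → T) (θ : V → T)
    (P : Multiset (Eqn F V)) : Prop :=
  ∀ e ∈ P, ev ap θ e.1 = ev ap θ e.2

section Aux

variable {F V T : Type} [DecidableEq V] (ap : F → List T → T) (θ : V → T)

lemma ev_var (x : V) : ev ap θ (.var x) = θ x := by rw [ev]

lemma ev_app (f : F) (l : List (Tm F V)) :
    ev ap θ (.app f l) = ap f (l.map (ev ap θ)) := by
  rw [ev]; congr 1; simp [List.map_attach_eq_pmap]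

lemma ev_subst (σ : V → Tm F V) :
    ∀ t : Tm F V, ev ap θ (t.subst σ) = ev ap (fun z => ev ap θ (σ z)) t
  | .var x => by rw [Tm.subst, ev_var]
  | .app f l => by
    rw [Tm.subst, ev_app, ev_app]
    congr 1
    simp only [List.map_attach_eq_pmap, List.map_pmap, List.pmap_eq_map, List.map_map]
    apply List.map_congr_left
    intro t ht
    have := List.sizeOf_lt_of_mem ht
    exact ev_subst σ t
  termination_by t => sizeOf t
  decreasing_by simp only [Tm.app.sizeOf_spec]; omega

lemma ev_single (s : Tm F V) (x : V) (hx : θ x = ev ap θ s) (t : Tm F V) :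
    ev ap θ (t.subst (single x s)) = ev ap θ t := by
  rw [ev_subst]
  congr 1
  funext z
  unfold single
  split
  · subst z; exact hx.symm
  · rw [ev_var]

lemma solves_cons (e : Eqn F V) (P : Multiset (Eqn F V)) :
    Solves ap θ (e ::ₘ P) ↔ (ev ap θ e.1 = ev ap θ e.2 ∧ Solves ap θ P) := by
  simp only [Solves, Multiset.mem_cons]
  constructor
  · intro h; exact ⟨h e (Or.inl rfl), fun e' he' => h e' (Or.inr he')⟩
  · rintro ⟨h1, h2⟩ e' (rfl | he'); exact h1; exact h2 e' he'

lemma solves_substProb (x : V) (s : Tm F V) (hx : θ x = ev ap θ s)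
    (P : Multiset (Eqn F V)) :
    Solves ap θ (substProb x s P) ↔ Solves ap θ P := by
  simp only [Solves, substProb, Multiset.mem_map]
  constructor
  · intro h e he
    have := h _ ⟨e, he, rfl⟩
    rwa [ev_single ap θ s x hx, ev_single ap θ s x hx] at this
  · rintro h e ⟨e', he', rfl⟩
    rw [ev_single ap θ s x hx, ev_single ap θ s x hx]
    exact h e' he'

end Aux

/-- each unification rule (Remove, Decomp, Conflict, Choose,
Coalesce, Swap, Merge, Replace, Merep) preserves the set of solutions: a
(ground) assignment into the tree algebra solves the problem before a rule
application iff it solves the problem afterwards; a step to `⊥` (Conflict)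
means the problem has no solution. -/
theorem unification_rules_preserve_solutions
    {F V T : Type} [DecidableEq V]
    (ap : F → List T → T) (hap : InjAp ap)
    {P : Multiset (Eqn F V)} {Q : Option (Multiset (Eqn F V))}
    (hstep : UStep P Q) (θ : V → T) :
    (Q = none → ¬ Solves ap θ P) ∧
    (∀ P', Q = some P' → (Solves ap θ P ↔ Solves ap θ P')) := by
  have main : ∀ {P : Multiset (Eqn F V)} {Q : Option (Multiset (Eqn F V))},
      UStep1 P Q →
      (Q = none → ¬ Solves ap θ P) ∧
      (∀ P', Q = some P' → (Solves ap θ P ↔ Solves ap θ P')) := by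
    intro P Q h
    cases h with
    | remove s P =>
      refine ⟨fun h => by simp at h, fun P' hP' => ?_⟩
      cases hP'
      rw [solves_cons]; simp
    | decomp f ss ts P hlen =>
      refine ⟨fun h => by simp at h, fun P' hP' => ?_⟩
      cases hP'
      rw [solves_cons, ev_app, ev_app]
      have key : ap f (ss.map (ev ap θ)) = ap f (ts.map (ev ap θ)) ↔
          Solves ap θ (ss.zip ts : List (Eqn F V)) := by
        constructor
        · intro h e he
          have hmaps := (hap _ _ _ _ h).2
          rw [Multiset.mem_coe] at he
          obtain ⟨i, hi, hget⟩ := List.mem_iff_getElem.mp he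
          rw [List.getElem_zip] at hget
          rw [List.length_zip] at hi
          have hi1 : i < ss.length := by omega
          have hi2 : i < ts.length := by omega
          have := congrArg (fun l => l[i]?) hmaps
          simp only [List.getElem?_map] at this
          rw [List.getElem?_eq_getElem hi1, List.getElem?_eq_getElem hi2] at this
          simp only [Option.map_some] at this
          rw [← hget]
          exact Option.some.inj this
        · intro h
          congr 1
          apply List.ext_getElem (by simp [hlen])
          intro i hi1 hi2
          simp only [List.getElem_map]
          have hiz : i < (ss.zip ts).length := by simp only [List.length_map] at hi1 hi2; rw [List.length_zip]; omega
          have hmem : (ss[i]'(by simpa using hi1), ts[i]'(by simpa using hi2)) ∈ ss.zip ts := by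
            rw [List.mem_iff_getElem]
            exact ⟨i, hiz, by rw [List.getElem_zip]⟩
          exact h _ (Multiset.mem_coe.mpr hmem)
      have hsplit : Solves ap θ ((ss.zip ts : List (Eqn F V)) + P) ↔
          Solves ap θ (ss.zip ts : List (Eqn F V)) ∧ Solves ap θ P := by
        simp only [Solves, Multiset.mem_add]
        constructor
        · intro h; exact ⟨fun e he => h e (Or.inl he), fun e he => h e (Or.inr he)⟩
        · rintro ⟨h1, h2⟩ e (he | he); exact h1 e he; exact h2 e he
      rw [key, hsplit]
    | conflict f g ss ts P hne =>
      refine ⟨fun _ hs => ?_, fun P' hP' => by simp at hP'⟩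
      rw [solves_cons, ev_app, ev_app] at hs
      obtain ⟨hfg, hl⟩ := hap _ _ _ _ hs.1
      have := congrArg List.length hl
      simp only [List.length_map] at this
      tauto
    | choose x y P _ _ =>
      refine ⟨fun h => by simp at h, fun P' hP' => ?_⟩
      cases hP'
      rw [solves_cons, solves_cons]
      simp only [ev_var]
      constructor <;> (rintro ⟨h1, h2⟩; exact ⟨h1.symm, h2⟩)
    | coalesce x y P _ _ _ =>
      refine ⟨fun h => by simp at h, fun P' hP' => ?_⟩
      cases hP'
      rw [solves_cons, solves_cons]
      constructor
      · rintro ⟨h1, h2⟩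
        refine ⟨h1, ?_⟩
        rw [solves_substProb ap θ x (.var y) (by simpa [ev_var] using h1)]
        exact h2
      · rintro ⟨h1, h2⟩
        refine ⟨h1, ?_⟩
        rwa [solves_substProb ap θ x (.var y) (by simpa [ev_var] using h1)] at h2
    | swap u x P _ =>
      refine ⟨fun h => by simp at h, fun P' hP' => ?_⟩
      cases hP'
      rw [solves_cons, solves_cons]
      constructor <;> (rintro ⟨h1, h2⟩; exact ⟨h1.symm, h2⟩)
    | merge x s t P _ _ =>
      refine ⟨fun h => by simp at h, fun P' hP' => ?_⟩
      cases hP'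
      rw [solves_cons, solves_cons, solves_cons, solves_cons]
      constructor
      · rintro ⟨h1, h2, h3⟩; exact ⟨h1, h1.symm.trans h2, h3⟩
      · rintro ⟨h1, h2, h3⟩; exact ⟨h1, h1.trans h2, h3⟩
    | replace x s P _ _ _ =>
      refine ⟨fun h => by simp at h, fun P' hP' => ?_⟩
      cases hP'
      rw [solves_cons, solves_cons]
      constructor
      · rintro ⟨h1, h2⟩
        refine ⟨h1, ?_⟩
        rw [solves_substProb ap θ x s (by simpa [ev_var] using h1)]
        exact h2
      · rintro ⟨h1, h2⟩
        refine ⟨h1, ?_⟩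
        rwa [solves_substProb ap θ x s (by simpa [ev_var] using h1)] at h2
  cases hstep with
  | base h => exact main h
  | merep x y s P _ _ _ _ _ =>
    refine ⟨fun h => by simp at h, fun P' hP' => ?_⟩
    cases hP'
    rw [solves_cons, solves_cons, solves_cons, solves_cons]
    simp only [ev_var]
    constructor
    · rintro ⟨h1, h2, h3⟩; exact ⟨h1.trans h2, h2, h3⟩
    · rintro ⟨h1, h2, h3⟩; exact ⟨h1.trans h2.symm, h2, h3⟩
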